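/- The variance of the number of cycles of a uniformly random permutation of {1, …, n} equals ∑_{i=1}^{n} (i−1)/i². -/

import Mathlib

/-!
A permutation of `Fin (n + 1)` is a pair `(σ 0, e)` with `e` a permutation of `Fin n`
(`Equiv.Perm.decomposeFin`): for `σ 0 = 0` the point `0` is a new fixed point, otherwise `0`
is inserted into a cycle of `e`. So `σ` has one cycle more than `e` in the first case and as many
in the second, and the first two moments of the cycle count satisfy linear recursions in `n`,
from which the variance grows by exactly `n / (n + 1) ^ 2` at each step.
-/

open Finset Nat

namespace Equiv.Perm

variable {α : Type*} [DecidableEq α] [Fintype α]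

/-- `cycleType` omits the fixed points, so they are counted separately. -/
def numCycles (σ : Perm α) : ℕ :=
  Multiset.card σ.cycleType + Fintype.card {x // σ x = x}

theorem numCycles_add_card_support (σ : Perm α) :
    σ.numCycles + #σ.support = Multiset.card σ.cycleType + Fintype.card α := by
  have h : Fintype.card {x // σ x = x} = #σ.supportᶜ := by
    rw [Fintype.card_subtype]; congr 1; ext; simp
  rw [numCycles, h, card_compl, add_assoc, Nat.sub_add_cancel (card_le_univ _)]

theorem numCycles_swap_mul_of_apply_apply_eq {f : Perm α} {x : α} (hx : f x ≠ x)
    (hffx : f (f x) = x) : (swap x (f x) * f).numCycles = f.numCycles + 1 := by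
  set g := swap x (f x) * f
  have hfg : f = swap x (f x) * g := by simp [g, ← mul_assoc]
  have hd : Disjoint (swap x (f x)) g := by
    intro y
    by_cases hy : y = x ∨ y = f x
    · right; rcases hy with rfl | rfl <;> simp [g, hffx]
    · push Not at hy; left; exact swap_apply_of_ne_of_ne hy.1 hy.2
  have hsw : (swap x (f x)).IsCycle := isCycle_swap hx.symm
  have hct : Multiset.card f.cycleType = Multiset.card g.cycleType + 1 := by
    rw [hfg, hd.cycleType_mul, hsw.cycleType]
    simp [add_comm]
  have hsupp : #f.support = #g.support + 2 := by
    rw [hfg, hd.card_support_mul, card_support_swap hx.symm, add_comm]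
  have h₁ := numCycles_add_card_support g
  have h₂ := numCycles_add_card_support f
  omega

theorem numCycles_swap_mul_of_apply_apply_ne {f : Perm α} {x : α} (hx : f x ≠ x)
    (hffx : f (f x) ≠ x) : (swap x (f x) * f).numCycles = f.numCycles + 1 := by
  set c := f.cycleOf x
  have hcf : c ∈ f.cycleFactorsFinset :=
    cycleOf_mem_cycleFactorsFinset_iff.mpr (mem_support.mpr hx)
  have hcx : c x = f x := cycleOf_apply_self f x
  have hccx : c (c x) ≠ x := by rwa [hcx, cycleOf_apply_apply_self]
  have hc' : (swap x (c x) * c).IsCycle := (isCycle_cycleOf f hx).swap_mul (hcx ▸ hx) hccx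
  set g := f * c⁻¹
  have hd : Disjoint g c := disjoint_mul_inv_of_mem_cycleFactorsFinset hcf
  have hd' : Disjoint (swap x (c x) * c) g :=
    hd.symm.mono (by rw [support_swap_mul_eq _ _ hccx]; exact sdiff_subset) le_rfl
  have hf : f = c * g := by rw [← hd.commute.eq]; simp [g]
  have hct : Multiset.card (swap x (f x) * f).cycleType = Multiset.card f.cycleType := by
    have hprod : swap x (f x) * f = (swap x (c x) * c) * g := by rw [hcx, mul_assoc, ← hf]
    rw [hprod, hd'.cycleType_mul, hc'.cycleType, hf, hd.symm.cycleType_mul,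
      (isCycle_cycleOf f hx).cycleType]
    simp
  have hsupp : #(swap x (f x) * f).support + 1 = #f.support := by
    rw [support_swap_mul_eq f x hffx, sdiff_singleton_eq_erase,
      card_erase_add_one (mem_support.mpr hx)]
  have h₁ := numCycles_add_card_support (swap x (f x) * f)
  have h₂ := numCycles_add_card_support f
  omega

/-- `swap x (f x) * f` is `f` with `x` cut out of its cycle and made a fixed point. -/
theorem numCycles_swap_mul {f : Perm α} {x : α} (hx : f x ≠ x) :
    (swap x (f x) * f).numCycles = f.numCycles + 1 := by
  by_cases hffx : f (f x) = x
  · exact numCycles_swap_mul_of_apply_apply_eq hx hffx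
  · exact numCycles_swap_mul_of_apply_apply_ne hx hffx

theorem numCycles_extendDomain {β : Type*} [DecidableEq β] [Fintype β] {p : β → Prop}
    [DecidablePred p] (f : α ≃ Subtype p) (g : Perm α) :
    (g.extendDomain f).numCycles = g.numCycles + Fintype.card {b // ¬ p b} := by
  have h₁ := numCycles_add_card_support (g.extendDomain f)
  have h₂ := numCycles_add_card_support g
  rw [cycleType_extendDomain, card_support_extend_domain] at h₁
  have hcard : Fintype.card {b // ¬ p b} + Fintype.card α = Fintype.card β := by
    rw [Fintype.card_subtype_compl, Fintype.card_congr f,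
      Nat.sub_add_cancel (Fintype.card_subtype_le p)]
  omega

theorem decomposeFin_symm_zero {n : ℕ} (e : Perm (Fin n)) :
    decomposeFin.symm (0, e) = e.extendDomain (finSuccAboveEquiv 0) := by
  ext x
  refine Fin.cases ?_ (fun i => ?_) x
  · simp [extendDomain_apply_not_subtype]
  · have h := extendDomain_apply_image e (finSuccAboveEquiv 0) i
    simp only [finSuccAboveEquiv_apply, Fin.succAbove_zero] at h
    simp [h]

theorem numCycles_decomposeFin_symm {n : ℕ} (p : Fin (n + 1)) (e : Perm (Fin n)) :
    (decomposeFin.symm (p, e)).numCycles = e.numCycles + if p = 0 then 1 else 0 := by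
  have hzero : (decomposeFin.symm (0, e)).numCycles = e.numCycles + 1 := by
    rw [decomposeFin_symm_zero, numCycles_extendDomain]
    simp
  rcases eq_or_ne p 0 with rfl | hp
  · simpa using hzero
  · set σ := decomposeFin.symm (p, e)
    have hσ0 : σ 0 = p := decomposeFin_symm_apply_zero p e
    have hswap : swap 0 (σ 0) * σ = decomposeFin.symm (0, e) := by
      ext x
      refine Fin.cases ?_ (fun i => ?_) x <;> simp [σ]
    have := numCycles_swap_mul (by rwa [hσ0] : σ 0 ≠ 0)
    rw [hswap, hzero] at this
    rw [if_neg hp]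
    omega

theorem sum_perm_fin_succ_comp_numCycles {M : Type*} [AddCommMonoid M] (n : ℕ) (F : ℕ → M) :
    ∑ σ : Perm (Fin (n + 1)), F σ.numCycles =
      ∑ e : Perm (Fin n), F (e.numCycles + 1) + n • ∑ e : Perm (Fin n), F e.numCycles := by
  rw [← decomposeFin.symm.sum_comp, Fintype.sum_prod_type, Fin.sum_univ_succ]
  simp [numCycles_decomposeFin_symm, Fin.succ_ne_zero]

theorem card_univ_perm_fin (n : ℕ) : #(univ : Finset (Perm (Fin n))) = n ! := by
  simp [Fintype.card_perm]

theorem sum_numCycles_perm_fin_succ (n : ℕ) :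
    ∑ σ : Perm (Fin (n + 1)), (σ.numCycles : ℝ) =
      (n + 1) * ∑ e : Perm (Fin n), (e.numCycles : ℝ) + n ! := by
  rw [sum_perm_fin_succ_comp_numCycles n (fun k => (k : ℝ))]
  simp only [Nat.cast_add, Nat.cast_one, sum_add_distrib, sum_const, card_univ_perm_fin,
    nsmul_eq_mul, mul_one]
  ring

theorem sum_numCycles_sq_perm_fin_succ (n : ℕ) :
    ∑ σ : Perm (Fin (n + 1)), (σ.numCycles : ℝ) ^ 2 =
      (n + 1) * ∑ e : Perm (Fin n), (e.numCycles : ℝ) ^ 2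
        + 2 * ∑ e : Perm (Fin n), (e.numCycles : ℝ) + n ! := by
  rw [sum_perm_fin_succ_comp_numCycles n (fun k => (k : ℝ) ^ 2)]
  simp only [Nat.cast_add, Nat.cast_one, add_sq, mul_one, one_pow, sum_add_distrib, ← mul_sum,
    sum_const, card_univ_perm_fin, nsmul_eq_mul]
  ring

theorem variance_numCycles_perm_fin (n : ℕ) :
    (∑ σ : Perm (Fin n), (σ.numCycles : ℝ) ^ 2) / (n ! : ℝ)
      - ((∑ σ : Perm (Fin n), (σ.numCycles : ℝ)) / (n ! : ℝ)) ^ 2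
      = ∑ i ∈ range n, (i : ℝ) / ((i : ℝ) + 1) ^ 2 := by
  induction n with
  | zero => simp [numCycles]
  | succ n ih =>
    rw [sum_numCycles_sq_perm_fin_succ, sum_numCycles_perm_fin_succ, sum_range_succ, ← ih,
      Nat.factorial_succ]
    push_cast
    field_simp
    ring

end Equiv.Perm

theorem stmt_9_general (n : ℕ) :
    (∑ s : Equiv.Perm (Fin n),
        ((s.cycleType.card + Fintype.card {x : Fin n // s x = x} : ℕ) : ℝ) ^ 2)
        / (n.factorial : ℝ)
      - ((∑ s : Equiv.Perm (Fin n),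
          ((s.cycleType.card + Fintype.card {x : Fin n // s x = x} : ℕ) : ℝ))
          / (n.factorial : ℝ)) ^ 2
      = ∑ i ∈ Finset.range n, (i : ℝ) / ((i : ℝ) + 1) ^ 2 :=
  Equiv.Perm.variance_numCycles_perm_fin n

/-- The variance of the number of cycles of a uniformly random permutation of `{1,…,n}`
equals `∑_{i=1}^n (i-1)/i²`. -/
theorem stmt_9 (n : ℕ) (hn : 1 ≤ n) :
    (∑ s : Equiv.Perm (Fin n),
        ((s.cycleType.card + Fintype.card {x : Fin n // s x = x} : ℕ) : ℝ) ^ 2)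
        / (n.factorial : ℝ)
      - ((∑ s : Equiv.Perm (Fin n),
          ((s.cycleType.card + Fintype.card {x : Fin n // s x = x} : ℕ) : ℝ))
          / (n.factorial : ℝ)) ^ 2
      = ∑ i ∈ Finset.range n, (i : ℝ) / ((i : ℝ) + 1) ^ 2 :=
  stmt_9_general n
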